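/- Fix $y \in (-2,2)$ and $x \in \mathbb{R}$, and let $t$ be the inverse of the semicircle cumulative distribution function $F$. For each $n$, set $i_n = n F(y) - x\sqrt{\tfrac{1}{2\pi^2}\log n}$. Then, as $n \to \infty$, $t(i_n/n) = y - x\sqrt{\frac{2}{4 - y^2}} \cdot \frac{\sqrt{\log n}}{n} + o\big(\frac{\sqrt{\log n}}{n}\big)$; consequently $x_n := \sqrt{\frac{4 - t(i_n/n)^2}{2}} \cdot \frac{y - t(i_n/n)}{\sqrt{\log n}/n} \to x$. -/

import Mathlib

open MeasureTheory ProbabilityTheory Matrix Filter Asymptotics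

noncomputable section

instance matrixMeasurableSpace {m n α : Type*} [MeasurableSpace α] :
    MeasurableSpace (Matrix m n α) :=
  inferInstanceAs (MeasurableSpace (m → n → α))

/-- The number of eigenvalues (with multiplicity) of a Hermitian matrix `A` lying in the set `I`
(junk value `0` if `A` is not Hermitian). -/
def eigCount {𝕜 : Type*} [RCLike 𝕜] {n : ℕ} (A : Matrix (Fin n) (Fin n) 𝕜) (I : Set ℝ) : ℕ :=
  if h : A.IsHermitian then Nat.card {i : Fin n // h.eigenvalues i ∈ I} else 0

/-- The `i`-th smallest eigenvalue (0-based) of a Hermitian matrix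
(junk value `0` if `A` is not Hermitian). -/
def sortedEig {𝕜 : Type*} [RCLike 𝕜] {n : ℕ} (A : Matrix (Fin n) (Fin n) 𝕜) (i : Fin n) : ℝ :=
  if h : A.IsHermitian then (h.eigenvalues ∘ Tuple.sort h.eigenvalues) i else 0

/-- The `k`-th smallest eigenvalue, 1-based indexing, with junk value `0` out of range. -/
def eigVal {𝕜 : Type*} [RCLike 𝕜] {n : ℕ} (A : Matrix (Fin n) (Fin n) 𝕜) (k : ℕ) : ℝ :=
  if h : k - 1 < n then sortedEig A ⟨k - 1, h⟩ else 0

/-- The matrix `A / √n` where `n` is the size of `A`. -/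
def scaled {𝕜 : Type*} [RCLike 𝕜] {n : ℕ} (A : Matrix (Fin n) (Fin n) 𝕜) :
    Matrix (Fin n) (Fin n) 𝕜 :=
  ((Real.sqrt n)⁻¹ : ℝ) • A

/-- The semicircle measure of a set `I ⊆ ℝ`. -/
def semicircle (I : Set ℝ) : ℝ :=
  ∫ x in I ∩ Set.Icc (-2 : ℝ) 2, Real.sqrt (4 - x ^ 2) / (2 * Real.pi)

/-- The cumulative distribution function of the semicircle law. -/
def scCDF (u : ℝ) : ℝ :=
  ∫ s in (-2 : ℝ)..u, Real.sqrt (4 - s ^ 2) / (2 * Real.pi)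

/-- The classical location `t(x)`, the inverse of the semicircle CDF on `[-2,2]`. -/
def tLoc (x : ℝ) : ℝ :=
  sInf {u : ℝ | u ∈ Set.Icc (-2 : ℝ) 2 ∧ x ≤ scCDF u}

/-- The standard Gaussian cumulative distribution function. -/
def stdGaussCDF (x : ℝ) : ℝ :=
  ((gaussianReal 0 1) (Set.Iic x)).toReal

/-- A sequence of real random variables converges in distribution to the standard Gaussian law
`N(0,1)` (stated via pointwise convergence of the cumulative distribution functions, which is
equivalent since the Gaussian CDF is continuous). -/
def TendstoStdGaussian {Ω : Type*} [MeasureSpace Ω] (X : ℕ → Ω → ℝ) : Prop :=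
  ∀ x : ℝ, Tendsto (fun n => (ℙ {ω | X n ω ≤ x}).toReal) atTop (nhds (stdGaussCDF x))

/-- A real random variable has exponential decay. -/
def ExpDecay {Ω : Type*} [MeasureSpace Ω] (ξ : Ω → ℝ) : Prop :=
  ∃ C C' : ℝ, 0 < C ∧ 0 < C' ∧
    ∀ t : ℝ, C' ≤ t → ℙ {ω | t ^ C ≤ |ξ ω|} ≤ ENNReal.ofReal (Real.exp (-t))

/-- Condition (C0) for a complex random matrix: the real and imaginary parts of every entry are
independent and have exponential decay. -/
def CondC0 {Ω : Type*} [MeasureSpace Ω] {n : ℕ} (M : Ω → Matrix (Fin n) (Fin n) ℂ) : Prop :=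
  ∀ i j : Fin n,
    IndepFun (fun ω => (M ω i j).re) (fun ω => (M ω i j).im) ℙ ∧
    ExpDecay (fun ω => (M ω i j).re) ∧ ExpDecay (fun ω => (M ω i j).im)

/-- Condition (C0) for a real random matrix: every entry has exponential decay. -/
def CondC0Real {Ω : Type*} [MeasureSpace Ω] {n : ℕ} (M : Ω → Matrix (Fin n) (Fin n) ℝ) : Prop :=
  ∀ i j : Fin n, ExpDecay (fun ω => M ω i j)

/-- Index type for the independent real entries of a Hermitian random matrix: real and imaginary
parts of the above-diagonal entries, and (real) diagonal entries. -/
def WignerIndex (n : ℕ) : Type :=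
  {q : (Fin n × Fin n) × Bool // q.1.1 < q.1.2 ∨ (q.1.1 = q.1.2 ∧ q.2 = true)}

/-- The real/imaginary part (according to the boolean: `true` = real part) of an entry of a
complex random matrix. -/
def entryRV {Ω : Type*} {n : ℕ} (M : Ω → Matrix (Fin n) (Fin n) ℂ)
    (q : (Fin n × Fin n) × Bool) (ω : Ω) : ℝ :=
  if q.2 then (M ω q.1.1 q.1.2).re else (M ω q.1.1 q.1.2).im

/-- `M` is a GUE random matrix: Hermitian, for `i < j` the real and imaginary parts of the
`(i,j)` entry are iid centered Gaussians of variance `1/2`, the diagonal entries are iid centered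
Gaussians of variance `1`, and all these real entries are independent. -/
def IsGUE {Ω : Type*} [MeasureSpace Ω] {n : ℕ} (M : Ω → Matrix (Fin n) (Fin n) ℂ) : Prop :=
  (∀ ω, (M ω).IsHermitian) ∧
  (∀ i j : Fin n, Measurable fun ω => M ω i j) ∧
  (∀ i j : Fin n, i < j →
      Measure.map (fun ω => (M ω i j).re) ℙ = gaussianReal 0 (1/2) ∧
      Measure.map (fun ω => (M ω i j).im) ℙ = gaussianReal 0 (1/2)) ∧
  (∀ i : Fin n, Measure.map (fun ω => (M ω i i).re) ℙ = gaussianReal 0 1) ∧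
  iIndepFun (fun q : WignerIndex n => entryRV M q.1) ℙ

/-- `M` is a (complex Hermitian) Wigner random matrix: Hermitian, for `i < j` the real and
imaginary parts of the `(i,j)` entry are iid with mean `0` and variance `1/2`, the diagonal
entries are iid with mean `0` and variance `1`, and all these real entries are independent. -/
def IsWigner {Ω : Type*} [MeasureSpace Ω] {n : ℕ} (M : Ω → Matrix (Fin n) (Fin n) ℂ) : Prop :=
  (∀ ω, (M ω).IsHermitian) ∧
  (∀ i j : Fin n, Measurable fun ω => M ω i j) ∧
  (∃ μ : Measure ℝ, IsProbabilityMeasure μ ∧ (∫ x, x ∂μ) = 0 ∧ (∫ x, x ^ 2 ∂μ) = 1/2 ∧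
    ∀ i j : Fin n, i < j →
      Measure.map (fun ω => (M ω i j).re) ℙ = μ ∧
      Measure.map (fun ω => (M ω i j).im) ℙ = μ) ∧
  (∃ ν : Measure ℝ, IsProbabilityMeasure ν ∧ (∫ x, x ∂ν) = 0 ∧ (∫ x, x ^ 2 ∂ν) = 1 ∧
    ∀ i : Fin n, Measure.map (fun ω => (M ω i i).re) ℙ = ν) ∧
  iIndepFun (fun q : WignerIndex n => entryRV M q.1) ℙ

/-- Index type for the independent entries of a real symmetric random matrix. -/
def SymIndex (n : ℕ) : Type :=
  {q : Fin n × Fin n // q.1 ≤ q.2}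

/-- `M` is a GOE random matrix: symmetric, the above-diagonal entries are iid centered Gaussians
of variance `1`, the diagonal entries are iid centered Gaussians of variance `2`, and all these
entries are independent. -/
def IsGOE {Ω : Type*} [MeasureSpace Ω] {n : ℕ} (M : Ω → Matrix (Fin n) (Fin n) ℝ) : Prop :=
  (∀ ω, (M ω).IsHermitian) ∧
  (∀ i j : Fin n, Measurable fun ω => M ω i j) ∧
  (∀ i j : Fin n, i < j → Measure.map (fun ω => M ω i j) ℙ = gaussianReal 0 1) ∧
  (∀ i : Fin n, Measure.map (fun ω => M ω i i) ℙ = gaussianReal 0 2) ∧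
  iIndepFun (fun q : SymIndex n => fun ω => M ω q.1.1 q.1.2) ℙ

/-- `M` is a real symmetric Wigner random matrix: symmetric, the above-diagonal entries are iid
with mean `0` and variance `1`, the diagonal entries are iid with mean `0` and variance `2`, and
all these entries are independent. -/
def IsWignerReal {Ω : Type*} [MeasureSpace Ω] {n : ℕ} (M : Ω → Matrix (Fin n) (Fin n) ℝ) : Prop :=
  (∀ ω, (M ω).IsHermitian) ∧
  (∀ i j : Fin n, Measurable fun ω => M ω i j) ∧
  (∃ μ : Measure ℝ, IsProbabilityMeasure μ ∧ (∫ x, x ∂μ) = 0 ∧ (∫ x, x ^ 2 ∂μ) = 1 ∧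
    ∀ i j : Fin n, i < j → Measure.map (fun ω => M ω i j) ℙ = μ) ∧
  (∃ ν : Measure ℝ, IsProbabilityMeasure ν ∧ (∫ x, x ∂ν) = 0 ∧ (∫ x, x ^ 2 ∂ν) = 2 ∧
    ∀ i : Fin n, Measure.map (fun ω => M ω i i) ℙ = ν) ∧
  iIndepFun (fun q : SymIndex n => fun ω => M ω q.1.1 q.1.2) ℙ

/-- The corresponding entries of two complex random matrices have equal joint moments
`E[Re^m Im^l]` for all `m + l ≤ k`. -/
def MomentsMatch {Ω Ω' : Type*} [MeasureSpace Ω] [MeasureSpace Ω'] {n : ℕ} (k : ℕ)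
    (M : Ω → Matrix (Fin n) (Fin n) ℂ) (M' : Ω' → Matrix (Fin n) (Fin n) ℂ) : Prop :=
  ∀ i j : Fin n, ∀ m l : ℕ, m + l ≤ k →
    (∫ ω, (M ω i j).re ^ m * (M ω i j).im ^ l ∂ℙ) =
      ∫ ω, (M' ω i j).re ^ m * (M' ω i j).im ^ l ∂ℙ

/-- The corresponding entries of two real random matrices have equal moments up to order `k`. -/
def MomentsMatchReal {Ω Ω' : Type*} [MeasureSpace Ω] [MeasureSpace Ω'] {n : ℕ} (k : ℕ)
    (M : Ω → Matrix (Fin n) (Fin n) ℝ) (M' : Ω' → Matrix (Fin n) (Fin n) ℝ) : Prop :=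
  ∀ i j : Fin n, ∀ m : ℕ, m ≤ k →
    (∫ ω, (M ω i j) ^ m ∂ℙ) = ∫ ω, (M' ω i j) ^ m ∂ℙ

/-- The entries of `M` match the corresponding entries of GUE up to order `4`. -/
def MatchesGUE4 {Ω : Type*} [MeasureSpace Ω] {n : ℕ}
    (M : Ω → Matrix (Fin n) (Fin n) ℂ) : Prop :=
  ∃ (Ω' : Type) (_ : MeasureSpace Ω') (M' : Ω' → Matrix (Fin n) (Fin n) ℂ),
    IsProbabilityMeasure (ℙ : Measure Ω') ∧ IsGUE M' ∧ MomentsMatch 4 M M'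

/-- The entries of `M` match the corresponding entries of GOE up to order `4`. -/
def MatchesGOE4 {Ω : Type*} [MeasureSpace Ω] {n : ℕ}
    (M : Ω → Matrix (Fin n) (Fin n) ℝ) : Prop :=
  ∃ (Ω' : Type) (_ : MeasureSpace Ω') (M' : Ω' → Matrix (Fin n) (Fin n) ℝ),
    IsProbabilityMeasure (ℙ : Measure Ω') ∧ IsGOE M' ∧ MomentsMatchReal 4 M M'

end

/-! The classical location `t` is a left inverse of `F` on `[-2, 2]`, and `F' = ρ` with
`ρ(y) = √(4 - y²)/(2π) > 0` on `(-2, 2)`, so by the inverse function theorem `t` is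
differentiable at `F(y)` with derivative `1/ρ(y)`. Since `i_n/n = F(y) - x/(√2 π) · √(log n)/n`,
the first-order expansion of `t` at `F(y)` gives the `o(√(log n)/n)` statement, because
`x/(√2 π)/ρ(y) = x√(2/(4-y²))`. Dividing by `√(log n)/n` and using `t(i_n/n) → y` gives the
limit `√((4-y²)/2) · x√(2/(4-y²)) = x`. -/

open Real Set Topology

noncomputable def semicircleDensity (s : ℝ) : ℝ := √(4 - s ^ 2) / (2 * π)

lemma continuous_semicircleDensity : Continuous semicircleDensity := by
  unfold semicircleDensity; fun_prop

lemma semicircleDensity_pos {s : ℝ} (hs : s ∈ Ioo (-2 : ℝ) 2) : 0 < semicircleDensity s := by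
  have : 0 < 4 - s ^ 2 := by nlinarith [hs.1, hs.2]
  unfold semicircleDensity
  positivity

lemma div_semicircleDensity_eq {y : ℝ} (hy : y ∈ Ioo (-2 : ℝ) 2) (x : ℝ) :
    x / (√2 * π) / semicircleDensity y = x * √(2 / (4 - y ^ 2)) := by
  have h4 : 0 < 4 - y ^ 2 := by nlinarith [hy.1, hy.2]
  rw [semicircleDensity, sqrt_div zero_le_two]
  field_simp
  rw [sq_sqrt zero_le_two]

lemma hasStrictDerivAt_scCDF (u : ℝ) : HasStrictDerivAt scCDF (semicircleDensity u) u :=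
  intervalIntegral.integral_hasStrictDerivAt_right
    (continuous_semicircleDensity.intervalIntegrable _ _)
    (continuous_semicircleDensity.stronglyMeasurableAtFilter _ _)
    continuous_semicircleDensity.continuousAt

lemma strictMonoOn_scCDF : StrictMonoOn scCDF (Icc (-2) 2) := by
  refine strictMonoOn_of_deriv_pos (convex_Icc _ _)
    (fun u _ => (hasStrictDerivAt_scCDF u).hasDerivAt.continuousAt.continuousWithinAt)
    fun u hu => ?_
  rw [interior_Icc] at hu
  rw [(hasStrictDerivAt_scCDF u).hasDerivAt.deriv]
  exact semicircleDensity_pos hu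

lemma StrictMonoOn.csInf_setOf_le_apply {α β : Type*} [ConditionallyCompleteLinearOrder α]
    [Preorder β] {f : α → β} {s : Set α} (hf : StrictMonoOn f s) {u : α} (hu : u ∈ s) :
    sInf {w | w ∈ s ∧ f u ≤ f w} = u :=
  IsLeast.csInf_eq ⟨⟨hu, le_rfl⟩, fun _ hw => (hf.le_iff_le hu hw.1).1 hw.2⟩

lemma tLoc_scCDF {u : ℝ} (hu : u ∈ Icc (-2 : ℝ) 2) : tLoc (scCDF u) = u :=
  strictMonoOn_scCDF.csInf_setOf_le_apply hu

lemma hasStrictDerivAt_tLoc {y : ℝ} (hy : y ∈ Ioo (-2 : ℝ) 2) :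
    HasStrictDerivAt tLoc (semicircleDensity y)⁻¹ (scCDF y) :=
  (hasStrictDerivAt_scCDF y).to_local_left_inverse (semicircleDensity_pos hy).ne' <|
    Filter.eventually_of_mem (Icc_mem_nhds hy.1 hy.2) fun _ => tLoc_scCDF

section Asymptotics

variable {ι : Type*} {l : Filter ι}

lemma isLittleO_tLoc_scCDF_add {y : ℝ} (hy : y ∈ Ioo (-2 : ℝ) 2) {h : ι → ℝ}
    (hh : Tendsto h l (𝓝 0)) :
    (fun n => tLoc (scCDF y + h n) - (y + h n / semicircleDensity y)) =o[l] h := by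
  have := (hasDerivAt_iff_isLittleO_nhds_zero.1 (hasStrictDerivAt_tLoc hy).hasDerivAt)
    |>.comp_tendsto hh
  simpa [Function.comp_def, tLoc_scCDF (Ioo_subset_Icc_self hy), div_eq_mul_inv, sub_sub]
    using this

lemma Asymptotics.IsLittleO.tendsto_of_sub {t s : ι → ℝ} {y c : ℝ}
    (h : (fun n => t n - (y - c * s n)) =o[l] s) (hs : Tendsto s l (𝓝 0)) :
    Tendsto t l (𝓝 y) := by
  simpa using (h.trans_tendsto hs).add ((hs.const_mul c).const_sub y)

lemma Asymptotics.IsLittleO.tendsto_sub_div {t s : ι → ℝ} {y c : ℝ}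
    (h : (fun n => t n - (y - c * s n)) =o[l] s) (hs : ∀ᶠ n in l, s n ≠ 0) :
    Tendsto (fun n => (y - t n) / s n) l (𝓝 c) := by
  refine (show Tendsto (fun n => c - (t n - (y - c * s n)) / s n) l (𝓝 c) by
    simpa using h.tendsto_div_nhds_zero.const_sub c).congr' ?_
  filter_upwards [hs] with n hn
  field_simp
  ring

end Asymptotics

lemma tendsto_sqrt_log_div_atTop : Tendsto (fun x : ℝ => √(log x) / x) atTop (𝓝 0) := by
  have h : Tendsto (fun x : ℝ => log x / x * x⁻¹) atTop (𝓝 0) := by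
    simpa using isLittleO_log_id_atTop.tendsto_div_nhds_zero.mul tendsto_inv_atTop_zero
  refine (show Tendsto (fun x : ℝ => √(log x / x * x⁻¹)) atTop (𝓝 0) by
    simpa using h.sqrt).congr' ?_
  filter_upwards [eventually_ge_atTop 0] with x hx
  rw [← div_eq_mul_inv, div_div, ← sq, sqrt_div' _ (sq_nonneg x), sqrt_sq hx]

lemma natCast_mul_sub_mul_sqrt_log_div {n : ℕ} (hn : n ≠ 0) (a x : ℝ) :
    (n * a - x * √(log n / (2 * π ^ 2))) / n = a - x / (√2 * π) * (√(log n) / n) := by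
  rw [sqrt_div (log_natCast_nonneg n), sqrt_mul zero_le_two, sqrt_sq pi_pos.le]
  field_simp

/-- **Asymptotics of the classical location at `i_n = nF(y) - x√(log n/(2π²))`.**
For `y ∈ (-2,2)` and `x ∈ ℝ`, with `i n = n F(y) - x √(log n / (2π²))`, one has
`t(i n / n) = y - x √(2/(4-y²)) · √(log n)/n + o(√(log n)/n)`, and consequently
`x_n := √((4 - t(i n / n)²)/2) · (y - t(i n / n)) / (√(log n)/n) → x`. -/
theorem statement14 (y : ℝ) (hy : y ∈ Set.Ioo (-2 : ℝ) 2) (x : ℝ)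
    (i : ℕ → ℝ)
    (hi : ∀ n : ℕ, i n = n * scCDF y - x * Real.sqrt (Real.log n / (2 * Real.pi ^ 2))) :
    ((fun n : ℕ => tLoc (i n / n) -
        (y - x * Real.sqrt (2 / (4 - y ^ 2)) * (Real.sqrt (Real.log n) / n)))
      =o[Filter.atTop] (fun n : ℕ => Real.sqrt (Real.log n) / n)) ∧
    Filter.Tendsto (fun n : ℕ =>
        Real.sqrt ((4 - tLoc (i n / n) ^ 2) / 2) * (y - tLoc (i n / n)) /
          (Real.sqrt (Real.log n) / n))
      Filter.atTop (nhds x) := by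
  set s : ℕ → ℝ := fun n => √(log n) / n
  have hs : Tendsto s atTop (𝓝 0) := tendsto_sqrt_log_div_atTop.comp tendsto_natCast_atTop_atTop
  have hs_ne : ∀ᶠ n in atTop, s n ≠ 0 := by
    filter_upwards [eventually_ge_atTop 2] with n hn
    have : 0 < log n := log_pos (by exact_mod_cast hn)
    positivity
  have hexp : (fun n => tLoc (i n / n) - (y - x * √(2 / (4 - y ^ 2)) * s n)) =o[atTop] s := by
    refine ((isLittleO_tLoc_scCDF_add hy (h := fun n => -(x / (√2 * π)) * s n)
      (by simpa only [mul_zero] using hs.const_mul _)).trans_isBigO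
      (isBigO_const_mul_self _ s atTop)).congr' ?_ EventuallyEq.rfl
    filter_upwards [eventually_ne_atTop 0] with n hn
    rw [hi, natCast_mul_sub_mul_sqrt_log_div hn, ← div_semicircleDensity_eq hy x]
    simp only [s, neg_mul, ← sub_eq_add_neg]
    ring
  refine ⟨hexp, ?_⟩
  have hx : √((4 - y ^ 2) / 2) * (x * √(2 / (4 - y ^ 2))) = x := by
    have h4 : 0 < 4 - y ^ 2 := by nlinarith [hy.1, hy.2]
    rw [mul_left_comm, ← sqrt_mul (div_nonneg h4.le zero_le_two)]
    field_simp
    simp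
  simpa only [hx, mul_div_assoc] using
    ((((hexp.tendsto_of_sub hs).pow 2).const_sub 4).div_const 2).sqrt.mul
      (hexp.tendsto_sub_div hs_ne)
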